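/- arXiv:math-ph/0202035 — 6 statements merged into one kernel-verified Lean document; each statement's English description precedes it below -/
import Mathlib

section
/- Let A be a (possibly noncommutative) ring and let X, Y be elements of A. Then for every natural number n ≥ 1, X^n Y^n − (XY)^n = Σ_{t=1}^{n−1} Σ_{s=0}^{n−t−1} (XY)^{t−1} X^{n−t−s} (XY − YX) X^s Y^{n−t}. -/
private lemma pow_comm_expand {A : Type*} [Ring A] (X Y : A) :
    ∀ m : ℕ, X ^ m * Y - Y * X ^ m =
      ∑ s ∈ Finset.range m, X ^ (m - 1 - s) * (X * Y - Y * X) * X ^ s := by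
  intro m
  induction m with
  | zero => simp
  | succ m ih =>
    rw [Finset.sum_range_succ]
    have h1 : ∀ s ∈ Finset.range m,
        X ^ (m + 1 - 1 - s) * (X * Y - Y * X) * X ^ s =
        X * (X ^ (m - 1 - s) * (X * Y - Y * X) * X ^ s) := by
      intro s hs
      rw [Finset.mem_range] at hs
      have : m + 1 - 1 - s = (m - 1 - s) + 1 := by omega
      rw [this, pow_succ']
      noncomm_ring
    rw [Finset.sum_congr rfl h1, ← Finset.mul_sum, ← ih]
    have : m + 1 - 1 - m = 0 := by omega
    rw [this, pow_succ']
    noncomm_ring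

private lemma aux_commutator_sum {A : Type*} [Ring A] (X Y : A) :
    ∀ n : ℕ, X ^ (n + 1) * Y ^ (n + 1) - (X * Y) ^ (n + 1) =
      ∑ i ∈ Finset.range n, ∑ s ∈ Finset.range (n - i),
        (X * Y) ^ i * X ^ (n - i - s) * (X * Y - Y * X) * X ^ s * Y ^ (n - i) := by
  intro n
  induction n with
  | zero => simp
  | succ n ih =>
    rw [Finset.sum_range_succ']
    have h1 : ∀ j ∈ Finset.range n,
        (∑ s ∈ Finset.range (n + 1 - (j + 1)),
          (X * Y) ^ (j + 1) * X ^ (n + 1 - (j + 1) - s) * (X * Y - Y * X) * X ^ s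
            * Y ^ (n + 1 - (j + 1))) =
        X * Y * (∑ s ∈ Finset.range (n - j),
          (X * Y) ^ j * X ^ (n - j - s) * (X * Y - Y * X) * X ^ s * Y ^ (n - j)) := by
      intro j hj
      rw [Finset.mul_sum]
      have e1 : n + 1 - (j + 1) = n - j := by omega
      rw [e1]
      refine Finset.sum_congr rfl fun s hs => ?_
      rw [pow_succ']
      noncomm_ring
    rw [Finset.sum_congr rfl h1, ← Finset.mul_sum, ← ih]
    have h2 : (∑ s ∈ Finset.range (n + 1 - 0),
        (X * Y) ^ 0 * X ^ (n + 1 - 0 - s) * (X * Y - Y * X) * X ^ s * Y ^ (n + 1 - 0)) =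
        (X * (X ^ (n + 1) * Y - Y * X ^ (n + 1))) * Y ^ (n + 1) := by
      rw [pow_comm_expand, Finset.mul_sum, Finset.sum_mul]
      refine Finset.sum_congr rfl fun s hs => ?_
      rw [Finset.mem_range] at hs
      simp only [Nat.sub_zero]
      have e : n + 1 - s = (n + 1 - 1 - s) + 1 := by omega
      rw [e, pow_succ', pow_zero, one_mul]
      noncomm_ring
    rw [h2]
    rw [pow_succ' X, pow_succ' Y, pow_succ' (X * Y)]
    noncomm_ring

/-- Commutator expansion: `X^n Y^n − (XY)^n` as a double sum of terms
containing the commutator `XY − YX`. -/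
theorem pow_mul_pow_sub_mul_pow_eq_commutator_sum
    {A : Type*} [Ring A] (X Y : A) (n : ℕ) (hn : 1 ≤ n) :
    X ^ n * Y ^ n - (X * Y) ^ n =
      ∑ t ∈ Finset.Icc 1 (n - 1), ∑ s ∈ Finset.range (n - t),
        (X * Y) ^ (t - 1) * X ^ (n - t - s) * (X * Y - Y * X) * X ^ s * Y ^ (n - t) := by
  obtain ⟨m, rfl⟩ : ∃ m, n = m + 1 := ⟨n - 1, by omega⟩
  rw [aux_commutator_sum]
  have : m + 1 - 1 = m := rfl
  rw [this, ← Finset.Ico_add_one_right_eq_Icc, Finset.sum_Ico_eq_sum_range]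
  refine Finset.sum_congr (by congr 1) fun i hi => ?_
  have e1 : 1 + i - 1 = i := by omega
  have e2 : m + 1 - (1 + i) = m - i := by omega
  rw [e1, e2]
end

section
/- Let X and Y be commuting elements of a commutative ℝ-algebra (or of any ring where X and Y commute), let α, β be natural numbers, and let q be a real number with q > 1. Then there exist real coefficients t_0, t_1, …, t_{α+β} such that X^α Y^β = Σ_{n=0}^{α+β} t_n (X + q^n Y)^{α+β}. -/
/-!
Expanding each power binomially, `∑ₙ tₙ • (X + qⁿ • Y)^m` is the sum over `k ≤ m` of
`(m choose k) P(qᵏ) • X^(m-k) Y^k`, where `P = ∑ₙ tₙ Tⁿ`. Since the nodes `qᵏ` are distinct,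
Lagrange interpolation gives a `P` of degree `≤ m` vanishing at every `qᵏ` except `q^β`,
where it takes the value `(m choose β)⁻¹`.
-/

open Finset

theorem Commute.add_smul_pow {K A : Type*} [CommSemiring K] [Semiring A] [Algebra K A]
    {X Y : A} (h : Commute X Y) (c : K) (m : ℕ) :
    (X + c • Y) ^ m = ∑ k ∈ range (m + 1), (c ^ k * m.choose k) • (X ^ (m - k) * Y ^ k) := by
  rw [add_comm, (h.smul_right c).symm.add_pow]
  refine sum_congr rfl fun k _ => ?_
  rw [smul_pow, smul_mul_assoc, (h.pow_pow (m - k) k).symm.eq, mul_smul, Nat.cast_smul_eq_nsmul,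
    nsmul_eq_mul', smul_mul_assoc]

theorem Commute.sum_coeff_smul_add_pow_smul_pow {K A : Type*} [CommSemiring K] [Semiring A]
    [Algebra K A] {X Y : A} (h : Commute X Y) (c : K) (m : ℕ) {P : Polynomial K} {N : ℕ}
    (hP : P.natDegree < N) :
    ∑ n ∈ range N, P.coeff n • (X + c ^ n • Y) ^ m =
      ∑ k ∈ range (m + 1), (P.eval (c ^ k) * m.choose k) • (X ^ (m - k) * Y ^ k) := by
  simp_rw [h.add_smul_pow, smul_sum, smul_smul]
  rw [sum_comm]
  refine sum_congr rfl fun k _ => ?_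
  rw [← sum_smul, P.eval_eq_sum_range' hP, sum_mul]
  refine congrArg (· • _) (sum_congr rfl fun n _ => ?_)
  rw [← pow_mul, ← pow_mul, mul_comm n k, mul_assoc]

/-- If `X` and `Y` commute in an `ℝ`-algebra, `α β : ℕ` and `q > 1`, then the
monomial `X^α Y^β` is a real linear combination of the powers `(X + qⁿ • Y)^(α+β)`
for `0 ≤ n ≤ α + β`. -/
theorem pow_mul_pow_eq_lin_comb_of_powers
    {A : Type*} [Ring A] [Algebra ℝ A] (X Y : A) (hXY : X * Y = Y * X)
    (α β : ℕ) (q : ℝ) (hq : 1 < q) :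
    ∃ t : ℕ → ℝ,
      X ^ α * Y ^ β =
        ∑ n ∈ Finset.range (α + β + 1), t n • (X + q ^ n • Y) ^ (α + β) := by
  set m := α + β
  have hnodes : Set.InjOn (q ^ ·) (range (m + 1) : Set ℕ) :=
    (pow_right_strictMono₀ hq).injective.injOn
  let P := Lagrange.interpolate (range (m + 1)) (q ^ ·) (Pi.single β (m.choose β : ℝ)⁻¹)
  have hP : P.natDegree < m + 1 := by
    have hdeg := Lagrange.degree_interpolate_lt (Pi.single β (m.choose β : ℝ)⁻¹) hnodes
    rw [card_range] at hdeg
    exact Nat.lt_succ_of_le (Polynomial.natDegree_le_of_degree_le (Order.le_of_lt_succ hdeg))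
  have hβ : β ∈ range (m + 1) := mem_range.mpr (by omega)
  refine ⟨P.coeff, ?_⟩
  rw [Commute.sum_coeff_smul_add_pow_smul_pow hXY q m hP, sum_eq_single_of_mem β hβ]
  · rw [Lagrange.eval_interpolate_at_node _ hnodes hβ, Pi.single_eq_same,
      inv_mul_cancel₀ (Nat.cast_ne_zero.mpr (Nat.choose_pos (by omega)).ne'), one_smul, Nat.add_sub_cancel]
  · intro k hk hkβ
    rw [Lagrange.eval_interpolate_at_node _ hnodes hk, Pi.single_eq_of_ne hkβ, zero_mul, zero_smul]
end

section
/- Every element of the noncommutative polynomial algebra ℂ⟨A_1,…,A_a⟩ can be written as a finite linear combination Σ_n t_n B_n^{β_n}, where each B_n lies in the free Lie algebra on A_1,…,A_a (viewed inside ℂ⟨A_1,…,A_a⟩ via iterated commutators) and each β_n is a nonnegative integer. -/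
attribute [local instance 100] LieRing.ofAssociativeRing

open Finset

namespace FreeAlgSpanPow

variable (a : ℕ)

local notation "F" => FreeAlgebra ℂ (Fin a)

/-- The free Lie algebra inside the free algebra. -/
abbrev Lgen : LieSubalgebra ℂ (FreeAlgebra ℂ (Fin a)) :=
  LieSubalgebra.lieSpan ℂ (FreeAlgebra ℂ (Fin a)) (Set.range (FreeAlgebra.ι ℂ))

/-- The span of powers of Lie elements. -/
abbrev Spow : Submodule ℂ (FreeAlgebra ℂ (Fin a)) :=
  Submodule.span ℂ {x : FreeAlgebra ℂ (Fin a) | ∃ B ∈ Lgen a, ∃ β : ℕ, x = B ^ β}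

/-- The span of products of at most `k` Lie elements. -/
abbrev Tprod (k : ℕ) : Submodule ℂ (FreeAlgebra ℂ (Fin a)) :=
  Submodule.span ℂ {x : FreeAlgebra ℂ (Fin a) |
    ∃ l : List (FreeAlgebra ℂ (Fin a)), l.length ≤ k ∧ (∀ y ∈ l, y ∈ Lgen a) ∧ x = l.prod}

lemma Tprod_mono {k k' : ℕ} (h : k ≤ k') : Tprod a k ≤ Tprod a k' :=
  Submodule.span_mono (fun x ⟨l, hl, hm, hx⟩ => ⟨l, hl.trans h, hm, hx⟩)

lemma mul_Tprod {x y : FreeAlgebra ℂ (Fin a)} {k : ℕ} (hx : x ∈ Lgen a)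
    (hy : y ∈ Tprod a k) : x * y ∈ Tprod a (k + 1) := by
  induction hy using Submodule.span_induction with
  | mem z hz =>
      obtain ⟨l, hl, hm, rfl⟩ := hz
      refine Submodule.subset_span ⟨x :: l, by simpa using Nat.succ_le_succ hl, ?_, ?_⟩
      · intro y hy
        rcases List.mem_cons.1 hy with rfl | hy
        · exact hx
        · exact hm y hy
      · simp [List.prod_cons]
  | zero => simpa using zero_mem _
  | add u v hu hv ihu ihv => rw [mul_add]; exact add_mem ihu ihv
  | smul c u hu ihu => rw [mul_smul_comm]; exact Submodule.smul_mem _ c ihu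

lemma perm_diff : ∀ {l₁ l₂ : List (FreeAlgebra ℂ (Fin a))}, l₁.Perm l₂ →
    (∀ y ∈ l₁, y ∈ Lgen a) → l₁.prod - l₂.prod ∈ Tprod a (l₁.length - 1) := by
  intro l₁ l₂ h
  induction h with
  | nil => intro _; simpa using zero_mem _
  | @cons x t₁ t₂ h ih =>
      intro hm
      rcases t₁ with _ | ⟨b, t⟩
      · have : t₂ = [] := h.symm.eq_nil
        subst this
        simpa using zero_mem _
      · have hmt : ∀ y ∈ b :: t, y ∈ Lgen a := fun y hy => hm y (List.mem_cons_of_mem _ hy)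
        have hx : x ∈ Lgen a := hm x List.mem_cons_self
        have := mul_Tprod a hx (ih hmt)
        have eq : (x :: b :: t).prod - (x :: t₂).prod = x * ((b :: t).prod - t₂.prod) := by
          simp [List.prod_cons, mul_sub]
        rw [eq]
        simpa using this
  | swap x y l =>
      intro hm
      have hx : x ∈ Lgen a := hm x (by simp)
      have hy : y ∈ Lgen a := hm y (by simp)
      refine Submodule.subset_span ⟨⁅y, x⁆ :: l, by simp, ?_, ?_⟩
      · intro z hz
        rcases List.mem_cons.1 hz with rfl | hz
        · exact (Lgen a).lie_mem hy hx
        · exact hm z (by simp [hz])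
      · simp only [List.prod_cons, Ring.lie_def, sub_mul]
        simp [mul_assoc]
  | @trans l₁ l₂ l₃ h₁ h₂ ih₁ ih₂ =>
      intro hm
      have hm₂ : ∀ y ∈ l₂, y ∈ Lgen a := fun y hy => hm y (h₁.mem_iff.2 hy)
      have : l₁.prod - l₃.prod = (l₁.prod - l₂.prod) + (l₂.prod - l₃.prod) := by abel
      rw [this]
      exact add_mem (ih₁ hm) (h₁.length_eq ▸ ih₂ hm₂)

lemma pow_sum_univ {A : Type*} [Ring A] {α : Type*} [Fintype α] [DecidableEq α] (u : α → A) :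
    ∀ n : ℕ, (∑ i, u i) ^ n =
      ∑ f : Fin n → α, (List.ofFn fun j => u (f j)).prod := by
  intro n
  induction n with
  | zero => simp
  | succ n ih =>
      rw [pow_succ', ih, Finset.mul_sum, ← (Fin.consEquiv fun _ : Fin (n+1) => α).sum_comp
        (fun f => (List.ofFn fun j => u (f j)).prod), Fintype.sum_prod_type]
      simp_rw [Finset.sum_mul]
      rw [Finset.sum_comm]
      refine Finset.sum_congr rfl fun x _ => Finset.sum_congr rfl fun g _ => ?_
      rw [List.ofFn_succ]
      simp [Fin.consEquiv]

lemma comb {m : ℕ} (J : Finset (Fin m)) :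
    ∑ I ∈ (univ : Finset (Fin m)).powerset, (if J ⊆ I then ((-1 : ℂ)) ^ I.card else 0) =
      if J = univ then ((-1 : ℂ)) ^ m else 0 := by
  rw [← Finset.sum_filter]
  rw [Finset.sum_nbij' (i := fun I => I \ J) (j := fun K => K ∪ J)
    (t := Jᶜ.powerset) (g := fun K => ((-1 : ℂ)) ^ (K.card + J.card))]
  · simp_rw [pow_add]
    have hz : (∑ K ∈ Jᶜ.powerset, ((-1 : ℂ)) ^ K.card) = if Jᶜ = ∅ then 1 else 0 := by
      have h := Finset.sum_powerset_neg_one_pow_card (x := Jᶜ)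
      exact_mod_cast h
    rw [← Finset.sum_mul, hz]
    by_cases h : J = univ
    · subst h
      simp
    · rw [if_neg h, if_neg (by simpa [Finset.compl_eq_empty_iff] using h), zero_mul]
  · intro I hI
    simp only [Finset.mem_filter, Finset.mem_powerset] at hI
    simp only [Finset.mem_powerset]
    intro x hx
    simp only [Finset.mem_sdiff] at hx
    simp [Finset.mem_compl, hx.2]
  · intro K hK
    simp only [Finset.mem_powerset] at hK
    simp only [Finset.mem_filter, Finset.mem_powerset]
    exact ⟨Finset.subset_univ _, Finset.subset_union_right⟩
  · intro I hI
    simp only [Finset.mem_filter, Finset.mem_powerset] at hI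
    exact Finset.sdiff_union_of_subset hI.2
  · intro K hK
    simp only [Finset.mem_powerset] at hK
    refine Finset.union_sdiff_cancel_right ?_
    rw [Finset.disjoint_left]
    intro x hx
    have := hK hx
    simpa [Finset.mem_compl] using this
  · intro I hI
    simp only [Finset.mem_filter, Finset.mem_powerset] at hI
    congr 1
    rw [Finset.card_sdiff_of_subset hI.2]
    have := Finset.card_le_card hI.2
    omega


lemma list_prod_mem : ∀ (m : ℕ) (l : List (FreeAlgebra ℂ (Fin a))), l.length = m →
    (∀ y ∈ l, y ∈ Lgen a) → l.prod ∈ Spow a := by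
  intro m
  induction m using Nat.strong_induction_on with
  | _ m ih =>
  intro l hlen hm
  rcases Nat.eq_zero_or_pos m with h0 | hpos
  · subst h0
    rw [List.length_eq_zero_iff] at hlen
    subst hlen
    exact Submodule.subset_span ⟨0, zero_mem _, 0, by simp⟩
  subst hlen
  set m := l.length with hm_def
  set v : Fin m → FreeAlgebra ℂ (Fin a) := l.get with hv_def
  have hv : ∀ i, v i ∈ Lgen a := fun i => hm _ (List.get_mem l i)
  set W : (Fin m → Fin m) → FreeAlgebra ℂ (Fin a) :=
    fun f => (List.ofFn fun j => v (f j)).prod with hW_def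
  have hT : Tprod a (m - 1) ≤ Spow a := by
    rw [Submodule.span_le]
    rintro x ⟨l', hl', hm', rfl⟩
    exact ih l'.length (lt_of_le_of_lt hl' (Nat.pred_lt (Nat.pos_iff_ne_zero.1 hpos))) l' rfl hm'
  -- expansion of powers of partial sums
  have expand : ∀ I : Finset (Fin m), (∑ i ∈ I, v i) ^ m =
      ∑ f : Fin m → Fin m, (if (∀ j, f j ∈ I) then W f else 0) := by
    intro I
    have h1 : ∑ i ∈ I, v i = ∑ i : Fin m, (if i ∈ I then v i else 0) := by
      rw [Finset.sum_ite_mem, Finset.univ_inter]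
    rw [h1, pow_sum_univ]
    refine Finset.sum_congr rfl fun f _ => ?_
    by_cases hf : ∀ j, f j ∈ I
    · rw [if_pos hf]
      congr 1
      exact congrArg List.ofFn (funext fun j => if_pos (hf j))
    · rw [if_neg hf]
      push_neg at hf
      obtain ⟨j, hj⟩ := hf
      refine List.prod_eq_zero ?_
      rw [List.mem_ofFn]
      exact ⟨j, by simp [hj]⟩
  -- the inclusion-exclusion combination
  have calc1 : ∑ I ∈ (univ : Finset (Fin m)).powerset, ((-1 : ℂ) ^ I.card) • (∑ i ∈ I, v i) ^ m
      = ∑ f : Fin m → Fin m, (if Finset.image f univ = univ then ((-1 : ℂ) ^ m) • W f else 0) := by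
    simp_rw [expand, Finset.smul_sum]
    rw [Finset.sum_comm]
    refine Finset.sum_congr rfl fun f _ => ?_
    have h2 : ∀ I : Finset (Fin m), ((-1 : ℂ) ^ I.card) • (if (∀ j, f j ∈ I) then W f else 0)
        = (if Finset.image f univ ⊆ I then ((-1 : ℂ)) ^ I.card else 0) • W f := by
      intro I
      have hiff : (∀ j, f j ∈ I) ↔ Finset.image f univ ⊆ I := by
        rw [Finset.image_subset_iff]
        simp
      by_cases hc : ∀ j, f j ∈ I
      · rw [if_pos hc, if_pos (hiff.1 hc)]
      · rw [if_neg hc, if_neg (fun h => hc (hiff.2 h)), smul_zero, zero_smul]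
    rw [Finset.sum_congr rfl (fun I _ => h2 I), ← Finset.sum_smul, comb]
    by_cases h : Finset.image f univ = univ
    · rw [if_pos h, if_pos h]
    · rw [if_neg h, if_neg h, zero_smul]
  -- the left side is in Spow
  have hXmem : ∑ I ∈ (univ : Finset (Fin m)).powerset,
      ((-1 : ℂ) ^ I.card) • (∑ i ∈ I, v i) ^ m ∈ Spow a := by
    refine Submodule.sum_mem _ fun I _ => Submodule.smul_mem _ _ ?_
    exact Submodule.subset_span ⟨∑ i ∈ I, v i, sum_mem (fun i _ => hv i), m, rfl⟩
  rw [calc1] at hXmem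
  rw [← Finset.sum_filter] at hXmem
  rw [← Finset.smul_sum] at hXmem
  have hXmem2 : ∑ f ∈ univ.filter (fun f : Fin m → Fin m => Finset.image f univ = univ), W f
      ∈ Spow a := by
    have := Submodule.smul_mem _ ((-1 : ℂ) ^ m) hXmem
    rwa [smul_smul, ← pow_add, Even.neg_one_pow ⟨m, rfl⟩, one_smul] at this
  -- every surjective word is congruent to l.prod mod Spow
  have hdiff : ∀ f ∈ univ.filter (fun f : Fin m → Fin m => Finset.image f univ = univ),
      W f - l.prod ∈ Spow a := by
    intro f hf
    rw [Finset.mem_filter] at hf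
    have hsurj : Function.Surjective f := by
      intro b
      have : b ∈ Finset.image f univ := by rw [hf.2]; exact Finset.mem_univ b
      obtain ⟨x, _, hx⟩ := Finset.mem_image.1 this
      exact ⟨x, hx⟩
    have hinj : Function.Injective f := Finite.injective_iff_surjective.2 hsurj
    let σ : Equiv.Perm (Fin m) := Equiv.ofBijective f ⟨hinj, hsurj⟩
    have hperm : (List.ofFn (v ∘ σ)).Perm (List.ofFn v) := Equiv.Perm.ofFn_comp_perm σ v
    have hmem : ∀ y ∈ List.ofFn (v ∘ σ), y ∈ Lgen a := by
      intro y hy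
      rw [List.mem_ofFn] at hy
      obtain ⟨i, rfl⟩ := hy
      exact hv _
    have := perm_diff a hperm hmem
    rw [List.length_ofFn] at this
    have heq : W f = (List.ofFn (v ∘ σ)).prod := rfl
    have heq2 : (List.ofFn v).prod = l.prod := by rw [hv_def, List.ofFn_get]
    rw [heq, ← heq2]
    exact hT this
  -- conclude
  set N := (univ.filter (fun f : Fin m → Fin m => Finset.image f univ = univ)).card with hN_def
  have hNpos : 0 < N := by
    refine Finset.card_pos.2 ⟨id, ?_⟩
    rw [Finset.mem_filter]
    exact ⟨Finset.mem_univ _, Finset.image_id⟩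
  have hsum : (N : ℂ) • l.prod ∈ Spow a := by
    have h3 : ∑ f ∈ univ.filter (fun f : Fin m → Fin m => Finset.image f univ = univ),
        (W f - l.prod) ∈ Spow a := Submodule.sum_mem _ hdiff
    have h4 := Submodule.sub_mem _ hXmem2 h3
    rw [Finset.sum_sub_distrib, sub_sub_cancel, Finset.sum_const] at h4
    rwa [Nat.cast_smul_eq_nsmul]
  have := Submodule.smul_mem _ ((N : ℂ))⁻¹ hsum
  rwa [smul_smul, inv_mul_cancel₀ (by exact_mod_cast hNpos.ne'), one_smul] at this

end FreeAlgSpanPow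

/-- Every element of the free associative algebra `ℂ⟨A_1, …, A_a⟩` is a finite
linear combination of powers `B^β` where `B` lies in the free Lie algebra on the
generators, i.e. in the Lie subalgebra (under the commutator bracket) generated by
the generators. -/
theorem freeAlgebra_mem_span_powers_of_lie_elements
    (a : ℕ) (p : FreeAlgebra ℂ (Fin a)) :
    p ∈ Submodule.span ℂ
      {x : FreeAlgebra ℂ (Fin a) |
        ∃ B ∈ LieSubalgebra.lieSpan ℂ (FreeAlgebra ℂ (Fin a))
            (Set.range (FreeAlgebra.ι ℂ)),
          ∃ β : ℕ, x = B ^ β} := by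
  show p ∈ FreeAlgSpanPow.Spow a
  induction p using FreeAlgebra.induction with
  | grade0 r =>
      rw [Algebra.algebraMap_eq_smul_one]
      exact Submodule.smul_mem _ _ (Submodule.subset_span ⟨0, zero_mem _, 0, by simp⟩)
  | grade1 x =>
      exact Submodule.subset_span ⟨FreeAlgebra.ι ℂ x,
        LieSubalgebra.subset_lieSpan ⟨x, rfl⟩, 1, (pow_one _).symm⟩
  | mul p q hp hq =>
      have hmul : FreeAlgSpanPow.Spow a * FreeAlgSpanPow.Spow a ≤ FreeAlgSpanPow.Spow a := by
        rw [Submodule.span_mul_span, Submodule.span_le]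
        rintro _ ⟨x, ⟨B, hB, β, rfl⟩, y, ⟨C, hC, γ, rfl⟩, rfl⟩
        have : B ^ β * C ^ γ = (List.replicate β B ++ List.replicate γ C).prod := by
          rw [List.prod_append, List.prod_replicate, List.prod_replicate]
        beta_reduce
        rw [this]
        refine FreeAlgSpanPow.list_prod_mem a _ _ rfl ?_
        intro y hy
        rcases List.mem_append.1 hy with h | h
        · rw [List.eq_of_mem_replicate h]; exact hB
        · rw [List.eq_of_mem_replicate h]; exact hC
      exact hmul (Submodule.mul_mem_mul hp hq)
  | add p q hp hq => exact add_mem hp hq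
end

section
/- Let L be a Lie algebra over a field of characteristic zero with universal enveloping algebra U(L). Then U(L) is spanned as a vector space by the set of powers {x^n : x ∈ L, n ∈ ℕ} (where x^n is taken in U(L)). -/
/-!
Polarization writes the symmetrized product `∑_σ x_{σ 1} ⋯ x_{σ n}` of elements of `L` as a
`ℤ`-combination of the powers `(∑_{i ∈ T} x_i)^n`. In `U(L)` a product of `n` generators changes
only by products of fewer generators when its factors are permuted (`xy - yx = [x, y]`), so
`n! • x_1 ⋯ x_n` is a combination of powers plus shorter products. Dividing by `n!` and inducting
on `n` puts every product of generators, hence all of `U(L)`, in the span of the powers.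
-/

open Finset

theorem Finset.sum_superset_neg_one_pow_card_compl {α : Type*} [Fintype α] [DecidableEq α]
    (s : Finset α) :
    ∑ T with s ⊆ T, (-1 : ℤ) ^ #Tᶜ = if s = univ then 1 else 0 := by
  have : ∑ T with s ⊆ T, (-1 : ℤ) ^ #Tᶜ = ∑ B ∈ sᶜ.powerset, (-1 : ℤ) ^ #B :=
    sum_nbij' compl compl (by simp) (by simp [subset_compl_comm])
      (fun _ _ => compl_compl _) (fun _ _ => compl_compl _) (fun _ _ => rfl)
  simp [this, sum_powerset_neg_one_pow_card]

theorem MultilinearMap.polarization {R ι M N : Type*} [CommSemiring R] [AddCommMonoid M]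
    [AddCommGroup N] [Module R M] [Module R N] [Fintype ι] [DecidableEq ι]
    (f : MultilinearMap R (fun _ : ι => M) N) (v : ι → M) :
    ∑ T : Finset ι, (-1 : ℤ) ^ #Tᶜ • f (fun _ => ∑ i ∈ T, v i) =
      ∑ σ : Equiv.Perm ι, f (v ∘ σ) := by
  have image_eq_univ (r : ι → ι) : univ.image r = univ ↔ Function.Surjective r := by
    simp [eq_univ_iff_forall, Function.Surjective]
  calc ∑ T : Finset ι, (-1 : ℤ) ^ #Tᶜ • f (fun _ => ∑ i ∈ T, v i)
      = ∑ T : Finset ι, ∑ r with univ.image r ⊆ T, (-1 : ℤ) ^ #Tᶜ • f (v ∘ r) := by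
        refine sum_congr rfl fun T _ => ?_
        rw [map_sum_finset, smul_sum]
        exact sum_congr (by ext; simp [image_subset_iff]) fun _ _ => rfl
    _ = ∑ r : ι → ι, (∑ T with univ.image r ⊆ T, (-1 : ℤ) ^ #Tᶜ) • f (v ∘ r) := by
        simp_rw [sum_smul]
        exact sum_comm' fun _ _ => by simp
    _ = ∑ r : ι → ι with Function.Surjective r, f (v ∘ r) := by
        simp_rw [sum_superset_neg_one_pow_card_compl, image_eq_univ, ite_smul, one_smul,
          zero_smul, sum_filter]
    _ = ∑ σ : Equiv.Perm ι, f (v ∘ σ) := by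
        refine (sum_bij (fun (σ : Equiv.Perm ι) _ => ⇑σ) (fun σ _ => by simpa using σ.surjective)
          (fun _ _ _ _ h => DFunLike.coe_injective h) (fun r hr => ?_) fun _ _ => rfl).symm
        have hr : r.Surjective := (mem_filter.1 hr).2
        exact ⟨Equiv.ofBijective r ⟨Finite.injective_iff_surjective.2 hr, hr⟩, mem_univ _, rfl⟩

namespace UniversalEnvelopingAlgebra

open Submodule

variable (k : Type*) [CommRing k] (L : Type*) [LieRing L] [LieAlgebra k L]

def spanPowers : Submodule k (UniversalEnvelopingAlgebra k L) :=
  span k {y | ∃ (x : L) (n : ℕ), y = ι k x ^ n}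

def spanProdLengthLT (m : ℕ) : Submodule k (UniversalEnvelopingAlgebra k L) :=
  span k {u | ∃ l : List L, l.length < m ∧ (l.map (ι k)).prod = u}

variable {L}

variable {k} in
theorem ι_mul_mem_spanProdLengthLT (x : L) {m : ℕ} {u : UniversalEnvelopingAlgebra k L}
    (hu : u ∈ spanProdLengthLT k L m) : ι k x * u ∈ spanProdLengthLT k L (m + 1) := by
  have : spanProdLengthLT k L m ≤
      (spanProdLengthLT k L (m + 1)).comap (LinearMap.mulLeft k (ι k x)) :=
    span_le.2 <| by
      rintro _ ⟨l, hl, rfl⟩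
      exact subset_span ⟨x :: l, by simpa, by simp⟩
  exact this hu

variable (L) in
theorem adjoin_range_ι : Algebra.adjoin k (Set.range (ι k : L → _)) = ⊤ := by
  rw [show (ι k : L → _) = mkAlgHom k L ∘ TensorAlgebra.ι k from rfl, Set.range_comp,
    ← AlgHom.map_adjoin, TensorAlgebra.adjoin_range_ι, Algebra.map_top, AlgHom.range_eq_top]
  exact RingCon.mkₐ_surjective _

variable (L) in
theorem span_prod_map_ι_eq_top :
    span k {u | ∃ l : List L, (l.map (ι k)).prod = u} = ⊤ := by
  rw [eq_top_iff, ← Algebra.top_toSubmodule (R := k), ← adjoin_range_ι k L,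
    Algebra.adjoin_eq_span]
  refine span_mono fun u hu => ?_
  induction hu using Submonoid.closure_induction with
  | mem _ h => obtain ⟨x, rfl⟩ := h; exact ⟨[x], by simp⟩
  | one => exact ⟨[], by simp⟩
  | mul _ _ _ _ h₁ h₂ =>
    obtain ⟨l₁, rfl⟩ := h₁
    obtain ⟨l₂, rfl⟩ := h₂
    exact ⟨l₁ ++ l₂, by simp⟩

theorem prod_map_ι_sub_mem_of_perm {l₁ l₂ : List L} (h : l₁.Perm l₂) :
    (l₁.map (ι k)).prod - (l₂.map (ι k)).prod ∈ spanProdLengthLT k L l₁.length := by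
  induction h with
  | nil => simp
  | cons x _ ih =>
    simpa [← mul_sub] using ι_mul_mem_spanProdLengthLT x ih
  | swap x y l =>
    refine subset_span ⟨⁅y, x⁆ :: l, by simp, ?_⟩
    simp only [List.map_cons, List.prod_cons, LieHom.map_lie, Ring.lie_def, sub_mul, mul_assoc]
  | @trans _ l₂ _ h₁₂ _ ih₁₂ ih₂₃ =>
    rw [← sub_add_sub_cancel _ (l₂.map (ι k)).prod]
    exact add_mem ih₁₂ (h₁₂.length_eq ▸ ih₂₃)

theorem sum_perm_prod_ofFn_ι_mem_spanPowers {n : ℕ} (v : Fin n → L) :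
    ∑ σ : Equiv.Perm (Fin n), (List.ofFn (ι k ∘ v ∘ σ)).prod ∈ spanPowers k L := by
  rw [← show _ = ∑ σ : Equiv.Perm (Fin n), (List.ofFn (ι k ∘ v ∘ σ)).prod from
    (MultilinearMap.mkPiAlgebraFin k n _).polarization (ι k ∘ v)]
  refine sum_mem fun T _ => zsmul_mem ?_ _
  rw [MultilinearMap.mkPiAlgebraFin_apply_const]
  exact subset_span ⟨∑ i ∈ T, v i, n, by simp⟩

open Nat in
theorem factorial_smul_prod_map_ι_mem (l : List L) :
    l.length ! • (l.map (ι k)).prod ∈ spanPowers k L ⊔ spanProdLengthLT k L l.length := by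
  have hperm (σ : Equiv.Perm (Fin l.length)) : (List.ofFn (l.get ∘ σ)).Perm l :=
    (σ.ofFn_comp_perm l.get).trans (by rw [List.ofFn_get])
  have : l.length ! • (l.map (ι k)).prod =
      ∑ σ : Equiv.Perm (Fin l.length), (List.ofFn (ι k ∘ l.get ∘ σ)).prod +
        ∑ σ : Equiv.Perm (Fin l.length),
          ((l.map (ι k)).prod - ((List.ofFn (l.get ∘ σ)).map (ι k)).prod) := by
    simp [List.map_ofFn, Fintype.card_perm]
  rw [this]
  exact add_mem (mem_sup_left (sum_perm_prod_ofFn_ι_mem_spanPowers k _))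
    (mem_sup_right (sum_mem fun σ _ => prod_map_ι_sub_mem_of_perm k (hperm σ).symm))

theorem prod_map_ι_mem_spanPowers (k : Type*) [Field k] [CharZero k] {L : Type*} [LieRing L]
    [LieAlgebra k L] (l : List L) : (l.map (ι k)).prod ∈ spanPowers k L := by
  induction h : l.length using Nat.strong_induction_on generalizing l with
  | _ n ih =>
    have hlower : spanProdLengthLT k L n ≤ spanPowers k L :=
      span_le.2 fun _ ⟨l', hl', hu⟩ => hu ▸ ih _ hl' l' rfl
    have := factorial_smul_prod_map_ι_mem k l
    rwa [h, sup_eq_left.2 hlower, ← Nat.cast_smul_eq_nsmul k,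
      smul_mem_iff _ (Nat.cast_ne_zero.2 n.factorial_ne_zero)] at this

end UniversalEnvelopingAlgebra

/-- Over a field of characteristic zero, the universal enveloping algebra `U(L)` of a
Lie algebra `L` is spanned as a vector space by the powers `(ι x)^n` of elements of `L`. -/
theorem universalEnvelopingAlgebra_span_powers
    (k : Type*) [Field k] [CharZero k]
    (L : Type*) [LieRing L] [LieAlgebra k L] :
    Submodule.span k
      {y : UniversalEnvelopingAlgebra k L |
        ∃ (x : L) (n : ℕ), y = (UniversalEnvelopingAlgebra.ι k x) ^ n} = ⊤ := by
  rw [eq_top_iff, ← UniversalEnvelopingAlgebra.span_prod_map_ι_eq_top k L, Submodule.span_le]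
  rintro _ ⟨l, rfl⟩
  exact UniversalEnvelopingAlgebra.prod_map_ι_mem_spanPowers k l
end

section
/- Let A be a unital C*-algebra (or Banach algebra) and let X, Y be self-adjoint elements. Then ‖e^{iX} e^{iY} − e^{i(X+Y)}‖ ≤ ‖[X,Y]‖ / 2, where ‖·‖ is the operator (C*) norm. -/
open NormedSpace Complex

lemma norm_exp_real_smul_I_smul_selfAdjoint
    {A : Type*} [NormedRing A] [StarRing A] [CStarRing A]
    [NormedAlgebra ℂ A] [CompleteSpace A] [StarModule ℂ A] [Nontrivial A]
    {Z : A} (hZ : IsSelfAdjoint Z) (t : ℝ) : ‖NormedSpace.exp (t • (I • Z))‖ = 1 := by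
  have h1 : t • (I • Z) = I • ((t : ℂ) • Z) := by
    rw [smul_comm]
    norm_num [← smul_assoc]
  have hr : IsSelfAdjoint ((t : ℂ)) := by
    rw [isSelfAdjoint_iff, Complex.star_def, Complex.conj_ofReal]
  have h2 : IsSelfAdjoint ((t : ℂ) • Z) := hr.smul hZ
  have h3 : NormedSpace.exp (t • (I • Z)) ∈ unitary A := by
    rw [h1]
    let +nondep : NormedAlgebra ℚ A := .restrictScalars ℚ ℂ A
    exact exp_mem_unitary_of_mem_skewAdjoint (h2.smul_mem_skewAdjoint conj_I)
  exact CStarRing.norm_coe_unitary ⟨_, h3⟩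

/-- In a unital C*-algebra, for self-adjoint `X` and `Y`,
`‖e^{iX} e^{iY} − e^{i(X+Y)}‖ ≤ ‖[X,Y]‖ / 2`. -/
theorem norm_exp_mul_exp_sub_exp_add_le
    {A : Type*} [NormedRing A] [StarRing A] [CStarRing A]
    [NormedAlgebra ℂ A] [CompleteSpace A] [StarModule ℂ A]
    (X Y : A) (hX : IsSelfAdjoint X) (hY : IsSelfAdjoint Y) :
    ‖NormedSpace.exp (I • X) * NormedSpace.exp (I • Y) - NormedSpace.exp (I • (X + Y))‖ ≤ ‖X * Y - Y * X‖ / 2 := by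
  rcases subsingleton_or_nontrivial A with h | h
  · rw [Subsingleton.elim (NormedSpace.exp (I • X) * NormedSpace.exp (I • Y) - NormedSpace.exp (I • (X + Y))) 0,
        Subsingleton.elim (X * Y - Y * X) 0]
    simp
  set a := I • X with ha
  set b := I • Y with hb
  set K := ‖X * Y - Y * X‖ with hK
  have hK0 : 0 ≤ K := norm_nonneg _
  have hab : a + b = I • (X + Y) := (smul_add I X Y).symm
  have na : ∀ t : ℝ, ‖NormedSpace.exp (t • a)‖ = 1 := fun t =>
    norm_exp_real_smul_I_smul_selfAdjoint hX t
  have nb : ∀ t : ℝ, ‖NormedSpace.exp (t • b)‖ = 1 := fun t =>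
    norm_exp_real_smul_I_smul_selfAdjoint hY t
  have nab : ∀ t : ℝ, ‖NormedSpace.exp (t • (a + b))‖ = 1 := fun t => by
    rw [hab]; exact norm_exp_real_smul_I_smul_selfAdjoint (hX.add hY) t
  have hcomm : b * a - a * b = X * Y - Y * X := by
    rw [ha, hb, smul_mul_smul_comm, smul_mul_smul_comm, ← smul_sub, I_mul_I, neg_one_smul]
    abel
  -- commutator bound
  have inner : ∀ t : ℝ, t ∈ Set.Icc (0:ℝ) 1 →
      ‖a * NormedSpace.exp (t • b) - NormedSpace.exp (t • b) * a‖ ≤ t * K := by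
    intro t ht
    set g : ℝ → A := fun s => NormedSpace.exp (s • b) * a * NormedSpace.exp ((t - s) • b) with hg
    have hcb : ∀ u : ℝ, NormedSpace.exp (u • b) * b = b * NormedSpace.exp (u • b) := fun u =>
      ((((Commute.refl b).smul_right u).exp_right).eq).symm
    have hg' : ∀ s : ℝ, HasDerivAt g (NormedSpace.exp (s • b) * (X * Y - Y * X) * NormedSpace.exp ((t - s) • b)) s := by
      intro s
      have h1 : HasDerivAt (fun s : ℝ => NormedSpace.exp (s • b) * a) (NormedSpace.exp (s • b) * b * a) s :=
        (hasDerivAt_exp_smul_const b s).mul_const a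
      have h2 : HasDerivAt (fun s : ℝ => NormedSpace.exp ((t - s) • b))
          (-(NormedSpace.exp ((t - s) • b) * b)) s := by
        have := (hasDerivAt_exp_smul_const b (t - s)).scomp s ((hasDerivAt_id s).const_sub t)
        simpa [Function.comp_def] using this
      have h3 := h1.mul h2
      convert h3 using 1
      · rfl
      rw [← hcomm, hcb (t - s)]
      noncomm_ring
    have hbd : ∀ s ∈ Set.univ, ‖NormedSpace.exp (s • b) * (X * Y - Y * X) * NormedSpace.exp ((t - s) • b)‖ ≤ K := by
      intro s _
      calc ‖NormedSpace.exp (s • b) * (X * Y - Y * X) * NormedSpace.exp ((t - s) • b)‖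
          ≤ ‖NormedSpace.exp (s • b) * (X * Y - Y * X)‖ * ‖NormedSpace.exp ((t - s) • b)‖ := norm_mul_le _ _
        _ ≤ ‖NormedSpace.exp (s • b)‖ * ‖X * Y - Y * X‖ * ‖NormedSpace.exp ((t - s) • b)‖ := by
            gcongr; exact norm_mul_le _ _
        _ = K := by rw [nb, nb]; ring
    have := convex_univ.norm_image_sub_le_of_norm_hasDerivWithin_le
      (fun s _ => (hg' s).hasDerivWithinAt) hbd (Set.mem_univ 0) (Set.mem_univ t)
    have hgt : g t = NormedSpace.exp (t • b) * a := by simp [hg]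
    have hg0 : g 0 = a * NormedSpace.exp (t • b) := by simp [hg]
    rw [hgt, hg0] at this
    rw [norm_sub_rev]
    calc ‖NormedSpace.exp (t • b) * a - a * NormedSpace.exp (t • b)‖ ≤ K * ‖t - 0‖ := this
      _ = t * K := by rw [sub_zero, Real.norm_eq_abs, _root_.abs_of_nonneg ht.1]; ring
  -- the path
  set F : ℝ → A := fun t => NormedSpace.exp (t • a) * NormedSpace.exp (t • b) * NormedSpace.exp ((1 - t) • (a + b)) with hF
  set F' : ℝ → A := fun t =>
    NormedSpace.exp (t • a) * (a * NormedSpace.exp (t • b) - NormedSpace.exp (t • b) * a) * NormedSpace.exp ((1 - t) • (a + b)) with hF'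
  have hder : ∀ t : ℝ, HasDerivAt F (F' t) t := by
    intro t
    have h1 : HasDerivAt (fun t : ℝ => NormedSpace.exp (t • a) * NormedSpace.exp (t • b))
        (NormedSpace.exp (t • a) * a * NormedSpace.exp (t • b) + NormedSpace.exp (t • a) * (NormedSpace.exp (t • b) * b)) t :=
      (hasDerivAt_exp_smul_const a t).mul (hasDerivAt_exp_smul_const b t)
    have h2 : HasDerivAt (fun t : ℝ => NormedSpace.exp ((1 - t) • (a + b)))
        (-(NormedSpace.exp ((1 - t) • (a + b)) * (a + b))) t := by
      have := (hasDerivAt_exp_smul_const (a + b) (1 - t)).scomp t ((hasDerivAt_id t).const_sub 1)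
      simpa [Function.comp_def] using this
    have h3 := h1.mul h2
    convert h3 using 1
    · rfl
    have hcE : NormedSpace.exp ((1 - t) • (a + b)) * (a + b) = (a + b) * NormedSpace.exp ((1 - t) • (a + b)) :=
      ((((Commute.refl (a + b)).smul_right (1 - t)).exp_right).eq).symm
    rw [hF']
    simp only
    rw [hcE]
    noncomm_ring
  have hcont : ∀ c : A, Continuous fun t : ℝ => NormedSpace.exp (t • c) := fun c => by
    let +nondep : NormedAlgebra ℚ A := .restrictScalars ℚ ℂ A; exact exp_continuous.comp (continuous_id.smul continuous_const)
  have hcontE : Continuous fun t : ℝ => NormedSpace.exp ((1 - t) • (a + b)) := by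
    let +nondep : NormedAlgebra ℚ A := .restrictScalars ℚ ℂ A; exact exp_continuous.comp ((continuous_const.sub continuous_id).smul continuous_const)
  have hcF' : Continuous F' := by
    exact ((hcont a).mul ((continuous_const.mul (hcont b)).sub ((hcont b).mul
      continuous_const))).mul hcontE
  have hint : IntervalIntegrable F' MeasureTheory.volume 0 1 := hcF'.intervalIntegrable 0 1
  have key : ∫ t in (0:ℝ)..1, F' t = F 1 - F 0 :=
    intervalIntegral.integral_eq_sub_of_hasDerivAt (fun t _ => hder t) hint
  have hF1 : F 1 = NormedSpace.exp a * NormedSpace.exp b := by simp [hF]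
  have hF0 : F 0 = NormedSpace.exp (I • (X + Y)) := by simp [hF, ← hab]
  have hmain : NormedSpace.exp a * NormedSpace.exp b - NormedSpace.exp (I • (X + Y)) = ∫ t in (0:ℝ)..1, F' t := by
    rw [key, hF1, hF0]
  rw [hmain]
  have hbound : ∀ t ∈ Set.Icc (0:ℝ) 1, ‖F' t‖ ≤ t * K := by
    intro t ht
    calc ‖F' t‖
        ≤ ‖NormedSpace.exp (t • a) * (a * NormedSpace.exp (t • b) - NormedSpace.exp (t • b) * a)‖ *
            ‖NormedSpace.exp ((1 - t) • (a + b))‖ := norm_mul_le _ _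
      _ ≤ ‖NormedSpace.exp (t • a)‖ * ‖a * NormedSpace.exp (t • b) - NormedSpace.exp (t • b) * a‖ *
            ‖NormedSpace.exp ((1 - t) • (a + b))‖ := by gcongr; exact norm_mul_le _ _
      _ = ‖a * NormedSpace.exp (t • b) - NormedSpace.exp (t • b) * a‖ := by rw [na, nab]; ring
      _ ≤ t * K := inner t ht
  calc ‖∫ t in (0:ℝ)..1, F' t‖ ≤ ∫ t in (0:ℝ)..1, ‖F' t‖ :=
        intervalIntegral.norm_integral_le_integral_norm zero_le_one
    _ ≤ ∫ t in (0:ℝ)..1, t * K := by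
        apply intervalIntegral.integral_mono_on zero_le_one
          (hcF'.norm.intervalIntegrable 0 1)
          ((continuous_id.mul continuous_const).intervalIntegrable 0 1)
        intro t ht; exact hbound t ht
    _ = K / 2 := by
        rw [intervalIntegral.integral_mul_const, integral_id]
        norm_num
        ring
end

section
/- Let A, B be elements of a Banach algebra. Then e^A e^B − e^{A+B} = ∫_0^1 ∫_0^{1−t} e^{t(A+B)} e^{(1−t−s)A} [A,B] e^{sA} e^{(1−t)B} ds dt, where [A,B] = AB − BA. -/
open NormedSpace

set_option linter.unusedSectionVars false

section Aux
variable {𝔸 : Type*} [NormedRing 𝔸] [NormedAlgebra ℂ 𝔸] [CompleteSpace 𝔸]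

lemma hasDerivAt_expC (X : 𝔸) (t : ℝ) :
    HasDerivAt (fun u : ℝ => exp (u • X)) (exp (t • X) * X) t := by
  exact hasDerivAt_exp_smul_const X t

lemma expC_continuous (X : 𝔸) : Continuous (fun u : ℝ => exp (u • X)) :=
  continuous_iff_continuousAt.2 fun t => (hasDerivAt_expC X t).continuousAt

lemma comm_exp (X : 𝔸) (c : ℝ) : X * exp (c • X) = exp (c • X) * X :=
  (((Commute.refl X).smul_right c).exp_right).eq

lemma hasDerivAt_conj (X C : 𝔸) (u s : ℝ) :
    HasDerivAt (fun s : ℝ => exp ((u - s) • X) * C * exp (s • X))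
      (exp ((u - s) • X) * (C * X - X * C) * exp (s • X)) s := by
  have h1 : HasDerivAt (fun s : ℝ => exp ((u - s) • X))
      (-(exp ((u - s) • X) * X)) s := by
    have := (hasDerivAt_expC X (u - s)).scomp s ((hasDerivAt_id s).const_sub u)
    simpa [Function.comp_def] using this
  have := ((h1.mul_const C).mul (hasDerivAt_expC X s))
  convert this using 1
  · rfl
  rw [← comm_exp X s]
  noncomm_ring

lemma commutator_integral (X C : 𝔸) (u : ℝ) :
    (∫ s in (0:ℝ)..u, exp ((u - s) • X) * (X * C - C * X) * exp (s • X))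
      = exp (u • X) * C - C * exp (u • X) := by
  have hcont : Continuous fun s : ℝ =>
      exp ((u - s) • X) * (C * X - X * C) * exp (s • X) := by
    exact (((expC_continuous X).comp (continuous_const.sub continuous_id)).mul
      continuous_const).mul (expC_continuous X)
  have key := intervalIntegral.integral_eq_sub_of_hasDerivAt
    (f := fun s : ℝ => exp ((u - s) • X) * C * exp (s • X))
    (fun s _ => hasDerivAt_conj X C u s) (hcont.intervalIntegrable 0 u)
  simp only [sub_self, sub_zero, zero_smul, exp_zero, one_mul, mul_one] at key
  have : ∀ s : ℝ, exp ((u - s) • X) * (X * C - C * X) * exp (s • X)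
      = -(exp ((u - s) • X) * (C * X - X * C) * exp (s • X)) := by
    intro s; noncomm_ring
  simp only [this, intervalIntegral.integral_neg, key, neg_sub]

lemma comm_exp_left (X : 𝔸) (c : ℝ) : exp (c • X) * X = X * exp (c • X) :=
  (comm_exp X c).symm

lemma hasDerivAt_F (A B : 𝔸) (t : ℝ) :
    HasDerivAt (fun t : ℝ => exp (t • (A + B)) * exp ((1 - t) • A) * exp ((1 - t) • B))
      (exp (t • (A + B)) * (B * exp ((1 - t) • A) - exp ((1 - t) • A) * B) *
        exp ((1 - t) • B)) t := by
  have h0 := hasDerivAt_expC (A + B) t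
  have h1 : HasDerivAt (fun t : ℝ => exp ((1 - t) • A))
      (-(exp ((1 - t) • A) * A)) t := by
    have := (hasDerivAt_expC A (1 - t)).scomp t ((hasDerivAt_id t).const_sub 1)
    simpa [Function.comp_def] using this
  have h2 : HasDerivAt (fun t : ℝ => exp ((1 - t) • B))
      (-(exp ((1 - t) • B) * B)) t := by
    have := (hasDerivAt_expC B (1 - t)).scomp t ((hasDerivAt_id t).const_sub 1)
    simpa [Function.comp_def] using this
  have := (h0.mul h1).mul h2
  convert this using 1
  · rfl
  simp only [Pi.mul_apply]
  rw [comm_exp_left B (1 - t), comm_exp_left A (1 - t)]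
  noncomm_ring

theorem exp_mul_exp_sub_exp_add_eq_integral_aux (A B : 𝔸) :
    exp A * exp B - exp (A + B) =
      ∫ t in (0:ℝ)..1, ∫ s in (0:ℝ)..(1 - t),
        exp (t • (A + B)) * exp ((1 - t - s) • A) * (A * B - B * A) *
          exp (s • A) * exp ((1 - t) • B) := by
  set F : ℝ → 𝔸 := fun t =>
    exp (t • (A + B)) * exp ((1 - t) • A) * exp ((1 - t) • B) with hFdef
  set G : ℝ → 𝔸 := fun t =>
    exp (t • (A + B)) * (B * exp ((1 - t) • A) - exp ((1 - t) • A) * B) *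
      exp ((1 - t) • B) with hGdef
  have hGcont : Continuous G := by
    refine (((expC_continuous (A + B)).mul ?_).mul
      ((expC_continuous B).comp (continuous_const.sub continuous_id)))
    exact (continuous_const.mul ((expC_continuous A).comp (continuous_const.sub continuous_id))).sub
      (((expC_continuous A).comp (continuous_const.sub continuous_id)).mul continuous_const)
  have key := intervalIntegral.integral_eq_sub_of_hasDerivAt
    (f := F) (f' := G) (fun t _ => hasDerivAt_F A B t) (hGcont.intervalIntegrable 0 1)
  have hF1 : F 1 = exp (A + B) := by simp [hFdef]
  have hF0 : F 0 = exp A * exp B := by simp [hFdef]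
  have step : ∀ t : ℝ, -(G t) =
      ∫ s in (0:ℝ)..(1 - t),
        exp (t • (A + B)) * exp ((1 - t - s) • A) * (A * B - B * A) *
          exp (s • A) * exp ((1 - t) • B) := by
    intro t
    have hint : IntervalIntegrable
        (fun s : ℝ => exp ((1 - t - s) • A) * (A * B - B * A) * exp (s • A))
        MeasureTheory.volume 0 (1 - t) := by
      exact ((((expC_continuous A).comp (continuous_const.sub continuous_id)).mul
        continuous_const).mul (expC_continuous A)).intervalIntegrable 0 (1 - t)
    have hG : -(G t) = exp (t • (A + B)) *
        (∫ s in (0:ℝ)..(1 - t),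
          exp ((1 - t - s) • A) * (A * B - B * A) * exp (s • A)) *
        exp ((1 - t) • B) := by
      rw [commutator_integral A B (1 - t), hGdef]
      simp only
      noncomm_ring
    have hint2 : IntervalIntegrable
        (fun s : ℝ => exp (t • (A + B)) *
          (exp ((1 - t - s) • A) * (A * B - B * A) * exp (s • A)))
        MeasureTheory.volume 0 (1 - t) := by
      exact (continuous_const.mul ((((expC_continuous A).comp
        (continuous_const.sub continuous_id)).mul
        continuous_const).mul (expC_continuous A))).intervalIntegrable 0 (1 - t)
    have e1 : (∫ s in (0:ℝ)..(1 - t), exp (t • (A + B)) *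
          (exp ((1 - t - s) • A) * (A * B - B * A) * exp (s • A)))
        = exp (t • (A + B)) * ∫ s in (0:ℝ)..(1 - t),
          exp ((1 - t - s) • A) * (A * B - B * A) * exp (s • A) := by
      simpa using
        (ContinuousLinearMap.mul ℂ 𝔸 (exp (t • (A + B)))).intervalIntegral_comp_comm hint
    have e2 : (∫ s in (0:ℝ)..(1 - t), (exp (t • (A + B)) *
          (exp ((1 - t - s) • A) * (A * B - B * A) * exp (s • A))) *
          exp ((1 - t) • B))
        = (∫ s in (0:ℝ)..(1 - t), exp (t • (A + B)) *
          (exp ((1 - t - s) • A) * (A * B - B * A) * exp (s • A))) *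
          exp ((1 - t) • B) := by
      simpa using
        ((ContinuousLinearMap.mul ℂ 𝔸).flip (exp ((1 - t) • B))).intervalIntegral_comp_comm hint2
    rw [hG, ← e1, ← e2]
    exact intervalIntegral.integral_congr fun s _ => by simp only [mul_assoc]
  calc exp A * exp B - exp (A + B) = -(F 1 - F 0) := by rw [hF0, hF1]; abel
    _ = -∫ t in (0:ℝ)..1, G t := by rw [key]
    _ = ∫ t in (0:ℝ)..1, -(G t) := (intervalIntegral.integral_neg).symm
    _ = _ := by
        refine intervalIntegral.integral_congr fun t _ => step t

end Aux

/-- Integral formula for the defect of the exponential addition law in a complex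
Banach algebra:
`e^A e^B − e^{A+B} = ∫_0^1 ∫_0^{1−t} e^{t(A+B)} e^{(1−t−s)A} [A,B] e^{sA} e^{(1−t)B} ds dt`. -/
theorem exp_mul_exp_sub_exp_add_eq_integral
    {𝔸 : Type*} [NormedRing 𝔸] [NormedAlgebra ℂ 𝔸] [CompleteSpace 𝔸]
    (A B : 𝔸) :
    exp A * exp B - exp (A + B) =
      ∫ t in (0:ℝ)..1, ∫ s in (0:ℝ)..(1 - t),
        exp (t • (A + B)) * exp ((1 - t - s) • A) * (A * B - B * A) *
          exp (s • A) * exp ((1 - t) • B) := by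
  exact exp_mul_exp_sub_exp_add_eq_integral_aux A B
end
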